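/- arXiv:1801.06021 — 2 statements merged into one kernel-verified Lean document; each statement's English description precedes it below -/
import Mathlib

section
/- On a locally finite weighted graph, let u : V → ℝ with u ≥ ε > 0 pointwise. Then for every x ∈ V, (Δ log u(x))² ≤ (2/ε²)(Δu(x))² + (2/ε⁴)(Γ(u)(x))². In particular, if Δ log u(x) ≥ 0 then (Δ log u(x))² ≤ (1/ε²)(Δu(x))². -/
open scoped BigOperators

/-- A locally finite weighted graph on vertex set `V`. -/
structure WeightedGraph (V : Type) where
  ω : V → V → ℝ
  m : V → ℝ
  symm : ∀ x y, ω x y = ω y x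
  weight_nonneg : ∀ x y, 0 ≤ ω x y
  m_pos : ∀ x, 0 < m x
  locFin : ∀ x, (Function.support (ω x)).Finite

namespace WeightedGraph

variable {V : Type} (G : WeightedGraph V)

/-- The (finite) set of neighbours of `x`. -/
noncomputable def nbrs (x : V) : Finset V := (G.locFin x).toFinset

/-- The graph Laplacian `Δ f (x) = (1/m x) ∑_{y∼x} ω x y (f y - f x)`. -/
noncomputable def lap (f : V → ℝ) (x : V) : ℝ :=
  (1 / G.m x) * ∑ y ∈ G.nbrs x, G.ω x y * (f y - f x)

/-- The gradient form `Γ(f,g)(x)`. -/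
noncomputable def grad (f g : V → ℝ) (x : V) : ℝ :=
  (1 / (2 * G.m x)) * ∑ y ∈ G.nbrs x, G.ω x y * (f y - f x) * (g y - g x)

/-- The gradient form `Γ(f)(x) = Γ(f,f)(x)`. -/
noncomputable def gradSq (f : V → ℝ) (x : V) : ℝ :=
  (1 / (2 * G.m x)) * ∑ y ∈ G.nbrs x, G.ω x y * (f y - f x) ^ 2

end WeightedGraph

/-!
For `a, b ≥ ε > 0` the increment of `log` is squeezed as
`(b - a) / a - (b - a) ^ 2 / (2 ε ^ 2) ≤ log b - log a ≤ (b - a) / a`.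
The upper bound is concavity of `log`; the lower bound is convexity of
`t ↦ log t + t ^ 2 / (2 ε ^ 2)` on `[ε, ∞)`, whose tangent at `a` has slope `1 / a + a / ε ^ 2`.
Since the Laplacian is monotone in the increments `f y - f x`, this gives
`Δu / u - Γ(u) / ε ^ 2 ≤ Δ log u ≤ Δu / u`, and squaring with `u ≥ ε` yields both bounds.
-/

open Real Set

theorem ConvexOn.add_mul_sub_le_of_hasDerivAt {S : Set ℝ} {f : ℝ → ℝ} {f' x y : ℝ}
    (hf : ConvexOn ℝ S f) (hx : x ∈ S) (hy : y ∈ S) (hd : HasDerivAt f f' x) :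
    f x + f' * (y - x) ≤ f y := by
  rcases lt_trichotomy x y with hxy | rfl | hyx
  · have := hf.le_slope_of_hasDerivAt hx hy hxy hd
    rw [slope_def_field, le_div_iff₀ (sub_pos.2 hxy)] at this
    linarith
  · simp
  · have := hf.slope_le_of_hasDerivAt hy hx hyx hd
    rw [slope_def_field, div_le_iff₀ (sub_pos.2 hyx)] at this
    linarith

theorem hasDerivAt_log_add_sq_div (ε : ℝ) {t : ℝ} (ht : t ≠ 0) :
    HasDerivAt (fun t => log t + t ^ 2 / (2 * ε ^ 2)) (t⁻¹ + t / ε ^ 2) t := by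
  refine ((hasDerivAt_log ht).add ((hasDerivAt_pow 2 t).div_const (2 * ε ^ 2))).congr_deriv ?_
  norm_num
  ring

theorem convexOn_log_add_sq_div {ε : ℝ} (hε : 0 < ε) :
    ConvexOn ℝ (Ici ε) (fun t => log t + t ^ 2 / (2 * ε ^ 2)) := by
  refine convexOn_of_hasDerivWithinAt2_nonneg (convex_Ici ε)
    (fun t ht => (hasDerivAt_log_add_sq_div ε (hε.trans_le ht).ne').continuousAt.continuousWithinAt)
    (f' := fun t => t⁻¹ + t / ε ^ 2) (f'' := fun t => -(t ^ 2)⁻¹ + 1 / ε ^ 2) ?_ ?_ ?_ <;>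
    rw [interior_Ici] <;> intro t (ht : ε < t)
  · exact (hasDerivAt_log_add_sq_div ε (hε.trans ht).ne').hasDerivWithinAt
  · exact ((hasDerivAt_inv (hε.trans ht).ne').add ((hasDerivAt_id t).div_const _)).hasDerivWithinAt
  · rw [neg_add_eq_sub, sub_nonneg, one_div]
    exact inv_anti₀ (by positivity) (pow_le_pow_left₀ hε.le ht.le 2)

theorem sub_div_sub_sq_div_le_log_sub_log {ε a b : ℝ} (hε : 0 < ε) (ha : ε ≤ a) (hb : ε ≤ b) :
    (b - a) / a - (b - a) ^ 2 / (2 * ε ^ 2) ≤ log b - log a := by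
  have ha₀ : a ≠ 0 := (hε.trans_le ha).ne'
  have tangent := (convexOn_log_add_sq_div hε).add_mul_sub_le_of_hasDerivAt ha hb
    (hasDerivAt_log_add_sq_div ε ha₀)
  have expand : (b - a) / a - (b - a) ^ 2 / (2 * ε ^ 2)
      = (a⁻¹ + a / ε ^ 2) * (b - a) + a ^ 2 / (2 * ε ^ 2) - b ^ 2 / (2 * ε ^ 2) := by
    field_simp
    ring
  linarith

theorem log_sub_log_le_sub_div {a b : ℝ} (ha : 0 < a) (hb : 0 < b) :
    log b - log a ≤ (b - a) / a := by
  have := log_le_sub_one_of_pos (div_pos hb ha)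
  rwa [log_div hb.ne' ha.ne', ← div_self ha.ne', ← sub_div] at this

theorem sq_le_max_sq_of_le_of_le {a b c : ℝ} (hab : a ≤ b) (hbc : b ≤ c) :
    b ^ 2 ≤ max (a ^ 2) (c ^ 2) := by
  rcases le_total 0 b with hb | hb
  · exact le_max_of_le_right (pow_le_pow_left₀ hb hbc 2)
  · exact le_max_of_le_left (by nlinarith)

namespace WeightedGraph

variable {V : Type} (G : WeightedGraph V)

theorem lap_mono {f g : V → ℝ} {x : V} (h : ∀ y, f y - f x ≤ g y - g x) :
    G.lap f x ≤ G.lap g x := by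
  have := G.m_pos x
  exact mul_le_mul_of_nonneg_left (Finset.sum_le_sum fun y _ =>
    mul_le_mul_of_nonneg_left (h y) (G.weight_nonneg x y)) (by positivity)

theorem lap_sub (f g : V → ℝ) (x : V) :
    G.lap (fun y => f y - g y) x = G.lap f x - G.lap g x := by
  simp only [lap, ← mul_sub, ← Finset.sum_sub_distrib]
  congr 1
  exact Finset.sum_congr rfl fun y _ => by ring

theorem lap_div_const (f : V → ℝ) (c : ℝ) (x : V) :
    G.lap (fun y => f y / c) x = G.lap f x / c := by
  simp only [lap, mul_div_assoc, Finset.sum_div, ← sub_div]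

theorem lap_sq_sub_self (f : V → ℝ) (x : V) :
    G.lap (fun y => (f y - f x) ^ 2) x = 2 * G.gradSq f x := by
  have := (G.m_pos x).ne'
  simp only [lap, gradSq, sub_self, zero_pow two_ne_zero, sub_zero]
  field_simp

theorem lap_log_le_lap_div {u : V → ℝ} (hu : ∀ y, 0 < u y) (x : V) :
    G.lap (fun y => log (u y)) x ≤ G.lap u x / u x := by
  rw [← lap_div_const]
  refine G.lap_mono fun y => ?_
  rw [← sub_div]
  exact log_sub_log_le_sub_div (hu x) (hu y)

theorem lap_div_sub_gradSq_div_le_lap_log {u : V → ℝ} {ε : ℝ} (hε : 0 < ε) (hu : ∀ y, ε ≤ u y)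
    (x : V) :
    G.lap u x / u x - G.gradSq u x / ε ^ 2 ≤ G.lap (fun y => log (u y)) x := by
  have second_order : G.lap (fun y => u y / u x - (u y - u x) ^ 2 / (2 * ε ^ 2)) x
      = G.lap u x / u x - G.gradSq u x / ε ^ 2 := by
    rw [lap_sub, lap_div_const, G.lap_div_const (fun y => (u y - u x) ^ 2), lap_sq_sub_self]
    ring
  rw [← second_order]
  refine G.lap_mono fun y => ?_
  have log_bound := sub_div_sub_sq_div_le_log_sub_log hε (hu x) (hu y)
  have hx : u x / u x = 1 := div_self (hε.trans_le (hu x)).ne'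
  rw [sub_div, hx] at log_bound
  rw [sub_self, zero_pow two_ne_zero, zero_div, sub_zero, hx]
  linarith

end WeightedGraph

theorem lap_log_sq_bound {V : Type} (G : WeightedGraph V) (u : V → ℝ) (ε : ℝ) (hε : 0 < ε)
    (hu : ∀ x, ε ≤ u x) (x : V) :
    (G.lap (fun y => Real.log (u y)) x) ^ 2 ≤
        (2 / ε ^ 2) * (G.lap u x) ^ 2 + (2 / ε ^ 4) * (G.gradSq u x) ^ 2 ∧
    (0 ≤ G.lap (fun y => Real.log (u y)) x →
      (G.lap (fun y => Real.log (u y)) x) ^ 2 ≤ (1 / ε ^ 2) * (G.lap u x) ^ 2) := by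
  set L := G.lap (fun y => log (u y)) x
  set D := G.lap u x
  set Γ := G.gradSq u x
  have upper : L ≤ D / u x := G.lap_log_le_lap_div (fun y => hε.trans_le (hu y)) x
  have lower : D / u x - Γ / ε ^ 2 ≤ L := G.lap_div_sub_gradSq_div_le_lap_log hε hu x
  have scale : (D / u x) ^ 2 ≤ 1 / ε ^ 2 * D ^ 2 := by
    rw [div_pow, one_div_mul_eq_div]
    exact div_le_div_of_nonneg_left (sq_nonneg D) (by positivity) (pow_le_pow_left₀ hε.le (hu x) 2)
  refine ⟨?_, fun hL => (pow_le_pow_left₀ hL upper 2).trans scale⟩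
  calc L ^ 2 ≤ max ((D / u x - Γ / ε ^ 2) ^ 2) ((D / u x) ^ 2) :=
        sq_le_max_sq_of_le_of_le lower upper
    _ ≤ 2 * (D / u x) ^ 2 + 2 * (Γ / ε ^ 2) ^ 2 :=
        max_le (by nlinarith [sq_nonneg (D / u x + Γ / ε ^ 2)]) (by nlinarith)
    _ ≤ 2 / ε ^ 2 * D ^ 2 + 2 / ε ^ 4 * Γ ^ 2 := by
        linarith [show 2 / ε ^ 2 * D ^ 2 = 2 * (1 / ε ^ 2 * D ^ 2) by ring,
          show 2 / ε ^ 4 * Γ ^ 2 = 2 * (Γ / ε ^ 2) ^ 2 by ring]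
end

section
/- Harnack inequality from Li–Yau: suppose a positive function u : (0,∞) × V → ℝ_{>0} on a weighted graph satisfies, for all t > 0 and x ∈ V, the Li–Yau inequality Γ(√u)(t,x)/u(t,x) − ∂_t √u(t,x)/√u(t,x) ≤ n/(2t), and suppose ω_min = inf ω_{xy} > 0 and m_max = sup m(x) < ∞. Then for all x, z ∈ V and 0 < t < s: u(t, x) ≤ u(s, z) (s/t)^n exp(4 m_max d(x,z)² / (ω_min (s − t))), where d is the graph distance. -/
open scoped BigOperators

/-- The underlying simple graph of a weighted graph. -/
def WeightedGraph.toSimpleGraph {V : Type} (G : WeightedGraph V) : SimpleGraph V where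
  Adj x y := x ≠ y ∧ 0 < G.ω x y
  symm := by
    constructor
    intro x y h
    exact ⟨h.1.symm, by rw [G.symm y x]; exact h.2⟩
  loopless := by
    constructor
    intro x h
    exact h.1 rfl

/-! Li–Yau says `∂ₜ log u + n/t ≥ 2Γ(√u)/u ≥ 0`, so `log u + n log t` is nondecreasing in time at
every vertex and in fact gains at least `2∫Γ(√u)/u`. Across an edge `x ∼ y` at a fixed time,
`log u(x) - log u(y) ≤ 2√(c Γ(√u)(y)/u(y))` with `c = 2 m_max/ω_min`. Jumping at a well-chosen time
`t ∈ [T₁, T₂]`, the gain of the flow at `y` after `t` pays for the jump up to `2c/(T₂ - T₁)`.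
Chaining this edge estimate along a geodesic, spending equal time on each edge, turns the
per-edge exponents `2c/Δt` into `2c d²/(s - t)`. -/

open Real Set

namespace WeightedGraph

variable {V : Type} (G : WeightedGraph V)

lemma mem_nbrs {x y : V} : y ∈ G.nbrs x ↔ G.ω x y ≠ 0 := by
  simp [nbrs, Function.mem_support]

lemma gradSq_nonneg (f : V → ℝ) (x : V) : 0 ≤ G.gradSq f x := by
  have := G.m_pos x
  exact mul_nonneg (by positivity)
    (Finset.sum_nonneg fun y _ => mul_nonneg (G.weight_nonneg x y) (sq_nonneg _))

lemma weight_mul_sq_le_gradSq (f : V → ℝ) (x y : V) :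
    G.ω x y / (2 * G.m x) * (f y - f x) ^ 2 ≤ G.gradSq f x := by
  by_cases hxy : G.ω x y = 0
  · rw [hxy, zero_div, zero_mul]
    exact G.gradSq_nonneg f x
  have := G.m_pos x
  calc G.ω x y / (2 * G.m x) * (f y - f x) ^ 2
      = 1 / (2 * G.m x) * (G.ω x y * (f y - f x) ^ 2) := by ring
    _ ≤ G.gradSq f x :=
      mul_le_mul_of_nonneg_left (Finset.single_le_sum (f := fun w => G.ω x w * (f w - f x) ^ 2)
        (fun w _ => mul_nonneg (G.weight_nonneg x w) (sq_nonneg _)) (G.mem_nbrs.2 hxy))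
        (by positivity)

lemma sq_sub_le_mul_gradSq {ωmin mmax : ℝ} (hωmin : 0 < ωmin) {x y : V}
    (hωxy : ωmin ≤ G.ω x y) (hmx : G.m x ≤ mmax) (f : V → ℝ) :
    (f y - f x) ^ 2 ≤ 2 * mmax / ωmin * G.gradSq f x := by
  have hmx₀ := G.m_pos x
  have hmmax : 0 < mmax := hmx₀.trans_le hmx
  have hedge : ωmin / (2 * mmax) * (f y - f x) ^ 2 ≤ G.gradSq f x :=
    (mul_le_mul_of_nonneg_right (div_le_div₀ (G.weight_nonneg x y) hωxy (by positivity)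
      (by linarith)) (sq_nonneg _)).trans (G.weight_mul_sq_le_gradSq f x y)
  calc (f y - f x) ^ 2 = 2 * mmax / ωmin * (ωmin / (2 * mmax) * (f y - f x) ^ 2) := by
        field_simp
    _ ≤ 2 * mmax / ωmin * G.gradSq f x := by gcongr

noncomputable def gradSqSqrtDiv (u : ℝ → V → ℝ) (t : ℝ) (x : V) : ℝ :=
  G.gradSq (fun y => √(u t y)) x / u t x

structure IsLiYauHeatSolution (u : ℝ → V → ℝ) (n : ℝ) : Prop where
  pos : ∀ t : ℝ, 0 < t → ∀ x, 0 < u t x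
  heat : ∀ (x : V) (t : ℝ), 0 < t → HasDerivAt (fun τ => u τ x) (G.lap (u t) x) t
  li_yau : ∀ (t : ℝ), 0 < t → ∀ x : V,
    G.gradSq (fun y => √(u t y)) x / u t x -
      deriv (fun τ => √(u τ x)) t / √(u t x) ≤ n / (2 * t)

end WeightedGraph

lemma log_sub_log_le_two_mul_sqrt_sub_sqrt_div {a b : ℝ} (ha : 0 < a) (hb : 0 < b) :
    log a - log b ≤ 2 * ((√a - √b) / √b) := by
  have hsa := sqrt_pos.2 ha
  have hsb := sqrt_pos.2 hb
  have hlog : log a - log b = 2 * log (√a / √b) := by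
    rw [log_div hsa.ne' hsb.ne', log_sqrt ha.le, log_sqrt hb.le]
    ring
  rw [hlog, sub_div, div_self hsb.ne']
  exact mul_le_mul_of_nonneg_left (log_le_sub_one_of_pos (div_pos hsa hsb)) zero_le_two

lemma le_mul_rpow_mul_exp_of_log_add_le {p q t s n K : ℝ} (hp : 0 < p) (hq : 0 < q)
    (ht : 0 < t) (hs : 0 < s) (h : log p + n * log t ≤ log q + n * log s + K) :
    p ≤ q * (s / t) ^ n * exp K := by
  calc p = exp (log p) := (exp_log hp).symm
    _ ≤ exp (log q + n * log (s / t) + K) := by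
        rw [log_div hs.ne' ht.ne']
        exact exp_le_exp.2 (by linarith)
    _ = q * (s / t) ^ n * exp K := by
        rw [exp_add, exp_add, exp_log hq, rpow_def_of_pos (div_pos hs ht), mul_comm n]

/-- If not, `D t = c/(b - a) + ∫ₜᵇ g` satisfies `D' = -g ≤ -D²/c`, so `1/D t - t/c` is
monotone on `[a, b]`; but it is `-a/c` at `b` and exceeds `-a/c` at `a`. -/
theorem exists_sqrt_mul_le_div_add_integral {g : ℝ → ℝ} {a b c : ℝ} (hab : a < b) (hc : 0 < c)
    (hg : ContinuousOn g (Icc a b)) (hg₀ : ∀ t ∈ Icc a b, 0 ≤ g t) :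
    ∃ t ∈ Icc a b, √(c * g t) ≤ c / (b - a) + ∫ s in t..b, g s := by
  by_contra! hlt
  set D : ℝ → ℝ := fun t => c / (b - a) + ∫ s in t..b, g s with hD
  have hD₀ : ∀ t ∈ Icc a b, 0 < D t := fun t ht =>
    add_pos_of_pos_of_nonneg (div_pos hc (sub_pos.2 hab))
      (intervalIntegral.integral_nonneg ht.2 fun s hs => hg₀ s ⟨ht.1.trans hs.1, hs.2⟩)
  have hDcont : ContinuousOn D (Icc a b) := by
    have := intervalIntegral.continuousOn_primitive_interval_left (μ := MeasureTheory.volume)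
      (hg.integrableOn_Icc.mono_set (uIcc_of_le hab.le).subset)
    rw [uIcc_of_le hab.le] at this
    exact continuousOn_const.add this
  have hDderiv : ∀ t ∈ Ioo a b, HasDerivAt D (-g t) t := fun t ht =>
    (intervalIntegral.integral_hasDerivAt_left
      ((hg.mono (Icc_subset_Icc ht.1.le le_rfl)).intervalIntegrable_of_Icc
        (μ := MeasureTheory.volume) ht.2.le)
      ((hg.mono Ioo_subset_Icc_self).stronglyMeasurableAtFilter isOpen_Ioo t ht)
      (hg.continuousAt (Icc_mem_nhds ht.1 ht.2))).const_add _
  have hmono : MonotoneOn (fun t => (D t)⁻¹ - t / c) (Icc a b) := by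
    refine monotoneOn_of_hasDerivWithinAt_nonneg (convex_Icc a b)
      ((hDcont.inv₀ fun t ht => (hD₀ t ht).ne').sub (continuousOn_id.div_const c))
      (fun t ht => ?_) (fun t ht => ?_) (f' := fun t => g t / D t ^ 2 - 1 / c)
    all_goals rw [interior_Icc] at ht
    · have := ((hDderiv t ht).inv (hD₀ t (Ioo_subset_Icc_self ht)).ne').sub
        ((hasDerivAt_id' t).div_const c)
      rw [neg_neg] at this
      exact this.hasDerivWithinAt
    · have hDt := hD₀ t (Ioo_subset_Icc_self ht)
      have hsq : D t ^ 2 ≤ c * g t := by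
        simpa [sq_sqrt (mul_nonneg hc.le (hg₀ t (Ioo_subset_Icc_self ht)))] using
          pow_le_pow_left₀ hDt.le (hlt t (Ioo_subset_Icc_self ht)).le 2
      rw [sub_nonneg, div_le_div_iff₀ hc (by positivity)]
      linarith
  have hend := hmono (left_mem_Icc.2 hab.le) (right_mem_Icc.2 hab.le) hab.le
  have hDb : D b = c / (b - a) := by simp [hD]
  simp only [hDb, inv_div] at hend
  have : (b - a) / c - b / c = -(a / c) := by ring
  linarith [inv_pos.2 (hD₀ a (left_mem_Icc.2 hab.le))]

def HarnackBetween {V : Type} (u : ℝ → V → ℝ) (n C k : ℝ) (x z : V) : Prop :=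
  ∀ t s : ℝ, 0 < t → t < s → u t x ≤ u s z * (s / t) ^ n * exp (C * k ^ 2 / (s - t))

/-- Splitting `[t, s]` in the proportion `a : b` makes the exponents add up to
`C (a + b)²/(s - t)`. -/
theorem HarnackBetween.trans {V : Type} {u : ℝ → V → ℝ} {n C a b : ℝ} {x y z : V}
    (hxy : HarnackBetween u n C a x y) (hyz : HarnackBetween u n C b y z) (ha : 0 < a)
    (hb : 0 < b) : HarnackBetween u n C (a + b) x z := by
  intro t s ht hts
  set r := t + a / (a + b) * (s - t) with hr
  have hrt : r - t = a * (s - t) / (a + b) := by rw [hr]; ring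
  have hsr : s - r = b * (s - t) / (a + b) := by rw [hr]; field_simp; ring
  have htr : t < r := by
    rw [← sub_pos, hrt]; exact div_pos (mul_pos ha (sub_pos.2 hts)) (add_pos ha hb)
  have hrs : r < s := by
    rw [← sub_pos, hsr]; exact div_pos (mul_pos hb (sub_pos.2 hts)) (add_pos ha hb)
  have hr₀ : 0 < r := ht.trans htr
  calc u t x ≤ u r y * (r / t) ^ n * exp (C * a ^ 2 / (r - t)) := hxy t r ht htr
    _ ≤ u s z * (s / r) ^ n * exp (C * b ^ 2 / (s - r)) * (r / t) ^ n
          * exp (C * a ^ 2 / (r - t)) := by gcongr; exact hyz r s hr₀ hrs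
    _ = u s z * ((s / r) ^ n * (r / t) ^ n) * exp (C * a ^ 2 / (r - t) + C * b ^ 2 / (s - r)) := by
        rw [exp_add]; ring
    _ = u s z * (s / t) ^ n * exp (C * (a + b) ^ 2 / (s - t)) := by
        rw [← mul_rpow (div_pos (ht.trans hts) hr₀).le (div_pos hr₀ ht).le,
          div_mul_div_cancel₀ hr₀.ne', hrt, hsr]
        congr 3
        have := (sub_pos.2 hts).ne'
        field_simp

namespace WeightedGraph.IsLiYauHeatSolution

variable {V : Type} {G : WeightedGraph V} {u : ℝ → V → ℝ} {n : ℝ}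
  (hu : G.IsLiYauHeatSolution u n)
include hu

lemma two_mul_gradSqSqrtDiv_sub_le {t : ℝ} (ht : 0 < t) (x : V) :
    2 * G.gradSqSqrtDiv u t x - n / t ≤ G.lap (u t) x / u t x := by
  have hux := hu.pos t ht x
  have h := hu.li_yau t ht x
  rw [((hu.heat x t ht).sqrt hux.ne').deriv, div_div, mul_assoc, mul_self_sqrt hux.le] at h
  have e₁ : G.lap (u t) x / (2 * u t x) = G.lap (u t) x / u t x / 2 := by ring
  have e₂ : n / (2 * t) = n / t / 2 := by ring
  rw [gradSqSqrtDiv]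
  linarith

lemma hasDerivAt_log_add_mul_log (x : V) {t : ℝ} (ht : 0 < t) :
    HasDerivAt (fun τ => log (u τ x) + n * log τ) (G.lap (u t) x / u t x + n / t) t := by
  simpa only [div_eq_mul_inv] using
    ((hu.heat x t ht).log (hu.pos t ht x).ne').fun_add ((hasDerivAt_log ht.ne').const_mul n)

lemma continuousOn_gradSqSqrtDiv (x : V) :
    ContinuousOn (fun t => G.gradSqSqrtDiv u t x) (Ioi 0) := by
  have hcu : ∀ w, ContinuousOn (fun t => u t w) (Ioi 0) := fun w t ht =>
    (hu.heat w t ht).continuousAt.continuousWithinAt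
  refine ContinuousOn.div ?_ (hcu x) fun t ht => (hu.pos t ht x).ne'
  exact continuousOn_const.mul (continuousOn_finsetSum _ fun w _ =>
    continuousOn_const.mul (((hcu w).sqrt.sub (hcu x).sqrt).pow 2))

lemma two_mul_integral_gradSqSqrtDiv_le (x : V) {a b : ℝ} (ha : 0 < a) (hab : a ≤ b) :
    2 * ∫ s in a..b, G.gradSqSqrtDiv u s x ≤
      (log (u b x) + n * log b) - (log (u a x) + n * log a) := by
  have hIcc : Icc a b ⊆ Ioi 0 := fun s hs => ha.trans_le hs.1
  have hderiv : ∀ s ∈ Icc a b, HasDerivAt (fun τ => log (u τ x) + n * log τ)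
      (G.lap (u s) x / u s x + n / s) s := fun s hs => hu.hasDerivAt_log_add_mul_log x (hIcc hs)
  rw [← intervalIntegral.integral_const_mul]
  exact intervalIntegral.integral_le_sub_of_hasDeriv_right_of_le hab
    (fun s hs => (hderiv s hs).continuousAt.continuousWithinAt)
    (fun s hs => (hderiv s (Ioo_subset_Icc_self hs)).hasDerivWithinAt)
    (((hu.continuousOn_gradSqSqrtDiv x).mono hIcc).integrableOn_Icc.const_mul 2)
    (fun s hs => by linarith [hu.two_mul_gradSqSqrtDiv_sub_le (hIcc (Ioo_subset_Icc_self hs)) x])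

lemma log_add_mul_log_le (x : V) {a b : ℝ} (ha : 0 < a) (hab : a ≤ b) :
    log (u a x) + n * log a ≤ log (u b x) + n * log b := by
  have hint := hu.two_mul_integral_gradSqSqrtDiv_le x ha hab
  have hint₀ : 0 ≤ ∫ s in a..b, G.gradSqSqrtDiv u s x := intervalIntegral.integral_nonneg hab
    fun s hs => div_nonneg (G.gradSq_nonneg _ x) (hu.pos s (ha.trans_le hs.1) x).le
  linarith

lemma log_le_log_add_two_mul_sqrt {ωmin mmax : ℝ} (hωmin : 0 < ωmin) {x y : V}
    (hωyx : ωmin ≤ G.ω y x) (hmy : G.m y ≤ mmax) {t : ℝ} (ht : 0 < t) :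
    log (u t x) ≤ log (u t y) + 2 * √(2 * mmax / ωmin * G.gradSqSqrtDiv u t y) := by
  have hux := hu.pos t ht x
  have huy := hu.pos t ht y
  have hjump : (√(u t x) - √(u t y)) / √(u t y) ≤ √(2 * mmax / ωmin * G.gradSqSqrtDiv u t y) :=
    calc (√(u t x) - √(u t y)) / √(u t y)
        ≤ √((√(u t x) - √(u t y)) ^ 2) / √(u t y) := by
          rw [sqrt_sq_eq_abs]
          gcongr
          exact le_abs_self _
      _ = √((√(u t x) - √(u t y)) ^ 2 / u t y) := (sqrt_div' _ huy.le).symm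
      _ ≤ √(2 * mmax / ωmin * G.gradSqSqrtDiv u t y) := by
          rw [gradSqSqrtDiv, ← mul_div_assoc]
          gcongr
          exact G.sq_sub_le_mul_gradSq hωmin hωyx hmy fun w => √(u t w)
  linarith [log_sub_log_le_two_mul_sqrt_sub_sqrt_div hux huy]

/-- Flow at `x` up to a time `t` chosen by `exists_sqrt_mul_le_div_add_integral`, jump to `y`,
then flow at `y`. -/
theorem harnackBetween_of_adj {ωmin mmax : ℝ} (hωmin : 0 < ωmin) {x y : V}
    (hωyx : ωmin ≤ G.ω y x) (hmy : G.m y ≤ mmax) :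
    HarnackBetween u n (4 * mmax / ωmin) 1 x y := by
  intro T₁ T₂ hT₁ hT
  have hc : 0 < 2 * mmax / ωmin := by
    have := (G.m_pos y).trans_le hmy
    positivity
  have hIcc : Icc T₁ T₂ ⊆ Ioi 0 := fun s hs => hT₁.trans_le hs.1
  obtain ⟨t, ht, hsel⟩ := exists_sqrt_mul_le_div_add_integral hT hc
    ((hu.continuousOn_gradSqSqrtDiv y).mono hIcc)
    (fun s hs => div_nonneg (G.gradSq_nonneg _ y) (hu.pos s (hIcc hs) y).le)
  have ht₀ : 0 < t := hIcc ht
  have hflow_x := hu.log_add_mul_log_le x hT₁ ht.1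
  have hjump := hu.log_le_log_add_two_mul_sqrt hωmin hωyx hmy ht₀
  have hflow_y := hu.two_mul_integral_gradSqSqrtDiv_le y ht₀ ht.2
  have hexp : 4 * mmax / ωmin * 1 ^ 2 / (T₂ - T₁) = 2 * (2 * mmax / ωmin / (T₂ - T₁)) := by ring
  rw [hexp]
  exact le_mul_rpow_mul_exp_of_log_add_le (hu.pos T₁ hT₁ x) (hu.pos T₂ (hT₁.trans hT) y) hT₁
    (hT₁.trans hT) (by linarith)

theorem harnackBetween_self (C : ℝ) (x : V) : HarnackBetween u n C 0 x x := by
  intro t s ht hts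
  rw [zero_pow two_ne_zero, mul_zero, zero_div]
  exact le_mul_rpow_mul_exp_of_log_add_le (hu.pos t ht x) (hu.pos s (ht.trans hts) x) ht
    (ht.trans hts) (by linarith [hu.log_add_mul_log_le x ht hts.le])

theorem harnackBetween_of_walk {ωmin mmax : ℝ} (hωmin : 0 < ωmin)
    (hω : ∀ x y, G.ω x y ≠ 0 → ωmin ≤ G.ω x y) (hm : ∀ x, G.m x ≤ mmax) {x z : V}
    (p : G.toSimpleGraph.Walk x z) : HarnackBetween u n (4 * mmax / ωmin) p.length x z := by
  induction p with
  | nil => simpa using hu.harnackBetween_self _ _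
  | @cons x y z hadj p ih =>
    have hedge := hu.harnackBetween_of_adj hωmin (hω y x (by rw [G.symm]; exact hadj.2.ne'))
      (hm y)
    by_cases hp : p.length = 0
    · obtain rfl := p.eq_of_length_eq_zero hp
      simpa [hp] using hedge
    · rw [SimpleGraph.Walk.length_cons, Nat.cast_succ, add_comm]
      exact hedge.trans ih one_pos (by positivity)

end WeightedGraph.IsLiYauHeatSolution

theorem harnack_from_li_yau_general {V : Type} (G : WeightedGraph V)
    (hconn : G.toSimpleGraph.Connected)
    (u : ℝ → V → ℝ) (n ωmin mmax : ℝ)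
    (hωmin : 0 < ωmin) (hω : ∀ x y, G.ω x y ≠ 0 → ωmin ≤ G.ω x y)
    (hm : ∀ x, G.m x ≤ mmax)
    (hpos : ∀ t : ℝ, 0 < t → ∀ x, 0 < u t x)
    (hheat : ∀ (x : V) (t : ℝ), 0 < t → HasDerivAt (fun τ => u τ x) (G.lap (u t) x) t)
    (hLY : ∀ (t : ℝ), 0 < t → ∀ x : V,
      G.gradSq (fun y => Real.sqrt (u t y)) x / u t x -
          deriv (fun τ => Real.sqrt (u τ x)) t / Real.sqrt (u t x) ≤ n / (2 * t)) :
    ∀ (x z : V) (t s : ℝ), 0 < t → t < s →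
      u t x ≤ u s z * (s / t) ^ n *
        Real.exp (4 * mmax * ((G.toSimpleGraph.dist x z : ℝ)) ^ 2 / (ωmin * (s - t))) := by
  intro x z t s ht hts
  obtain ⟨p, hp⟩ := hconn.exists_walk_length_eq_dist x z
  have hu : G.IsLiYauHeatSolution u n := ⟨hpos, hheat, hLY⟩
  have := hu.harnackBetween_of_walk hωmin hω hm p t s ht hts
  rwa [hp, div_mul_eq_mul_div, div_div] at this

theorem harnack_from_li_yau {V : Type} (G : WeightedGraph V)
    (hconn : G.toSimpleGraph.Connected)
    (u : ℝ → V → ℝ) (n ωmin mmax : ℝ) (hn : 0 < n)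
    (hωmin : 0 < ωmin) (hω : ∀ x y, G.ω x y ≠ 0 → ωmin ≤ G.ω x y)
    (hm : ∀ x, G.m x ≤ mmax)
    (hpos : ∀ t : ℝ, 0 < t → ∀ x, 0 < u t x)
    (hheat : ∀ (x : V) (t : ℝ), 0 < t → HasDerivAt (fun τ => u τ x) (G.lap (u t) x) t)
    (hLY : ∀ (t : ℝ), 0 < t → ∀ x : V,
      G.gradSq (fun y => Real.sqrt (u t y)) x / u t x -
          deriv (fun τ => Real.sqrt (u τ x)) t / Real.sqrt (u t x) ≤ n / (2 * t)) :
    ∀ (x z : V) (t s : ℝ), 0 < t → t < s →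
      u t x ≤ u s z * (s / t) ^ n *
        Real.exp (4 * mmax * ((G.toSimpleGraph.dist x z : ℝ)) ^ 2 / (ωmin * (s - t))) :=
  harnack_from_li_yau_general G hconn u n ωmin mmax hωmin hω hm hpos hheat hLY
end
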